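/- Stability of the differential radical ideal under Lie derivation: Let f be a polynomial vector field on ℝⁿ, let p be a polynomial, let N ≥ 1, and let I be the ideal of the polynomial ring generated by p, L_f(p), …, L_f^{N−1}(p). If L_f^N(p) ∈ I, then L_f^k(p) ∈ I for every natural number k. -/
import Mathlib


open MvPolynomial

/-- Lie derivative of polynomial `p` along the polynomial vector field `f`. -/
noncomputable def lieD {n : ℕ} (f : Fin n → MvPolynomial (Fin n) ℝ)
    (p : MvPolynomial (Fin n) ℝ) : MvPolynomial (Fin n) ℝ :=
  ∑ i, pderiv i p * f i

lemma lieD_add {n : ℕ} (f : Fin n → MvPolynomial (Fin n) ℝ)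
    (a b : MvPolynomial (Fin n) ℝ) : lieD f (a + b) = lieD f a + lieD f b := by
  simp [lieD, add_mul, Finset.sum_add_distrib]

lemma lieD_mul {n : ℕ} (f : Fin n → MvPolynomial (Fin n) ℝ)
    (a b : MvPolynomial (Fin n) ℝ) :
    lieD f (a * b) = lieD f a * b + a * lieD f b := by
  simp only [lieD, Derivation.leibniz, smul_eq_mul]
  rw [Finset.mul_sum, Finset.sum_mul, ← Finset.sum_add_distrib]
  exact Finset.sum_congr rfl fun i _ => by ring

lemma lieD_mem_span {n : ℕ} (f : Fin n → MvPolynomial (Fin n) ℝ)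
    (S : Set (MvPolynomial (Fin n) ℝ))
    (hS : ∀ s ∈ S, lieD f s ∈ Ideal.span S) :
    ∀ q ∈ Ideal.span S, lieD f q ∈ Ideal.span S := by
  intro q hq
  refine Submodule.span_induction (p := fun q _ => lieD f q ∈ Ideal.span S)
    (fun s hs => hS s hs) ?_ ?_ ?_ hq
  · simp [lieD]
  · intro a b _ _ ha hb
    rw [lieD_add]; exact add_mem ha hb
  · intro r a haS ha
    rw [smul_eq_mul, lieD_mul]
    exact add_mem (Ideal.mul_mem_left _ _ haS) (Ideal.mul_mem_left _ _ ha)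

/-- Stability of the differential radical ideal under Lie derivation. -/
theorem diffRadical_stable {n : ℕ} (hn : 1 ≤ n) (f : Fin n → MvPolynomial (Fin n) ℝ)
    (p : MvPolynomial (Fin n) ℝ) (N : ℕ) (hN : 1 ≤ N)
    (hmem : (lieD f)^[N] p ∈
      Ideal.span ((fun i : ℕ => (lieD f)^[i] p) '' Set.Iio N)) :
    ∀ k : ℕ, (lieD f)^[k] p ∈
      Ideal.span ((fun i : ℕ => (lieD f)^[i] p) '' Set.Iio N) := by
  set S := ((fun i : ℕ => (lieD f)^[i] p) '' Set.Iio N) with hSdef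
  have hgen : ∀ s ∈ S, lieD f s ∈ Ideal.span S := by
    rintro s ⟨i, hi, rfl⟩
    have : lieD f ((lieD f)^[i] p) = (lieD f)^[i+1] p := by
      rw [Function.iterate_succ_apply']
    rw [this]
    rcases lt_or_eq_of_le (Nat.succ_le_of_lt hi) with h | h
    · exact Ideal.subset_span ⟨i + 1, h, rfl⟩
    · subst h; exact hmem
  intro k
  induction k with
  | zero =>
    exact Ideal.subset_span ⟨0, hN, rfl⟩
  | succ k ih =>
    rw [Function.iterate_succ_apply']
    exact lieD_mem_span f S hgen _ ih
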